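/- arXiv:1605.07284 — 3 statements merged into one kernel-verified Lean document; each statement's English description precedes it below -/
import Mathlib

section
/- Let A be a finite index set and for each j ∈ A let K_j ≥ 1 and R_j ≥ 1 be natural numbers. Suppose for each j ∈ A, each k ∈ {1,...,K_j}, and each r ∈ {1,...,R_j} we are given a vector v_{j,k,r} ∈ ℝ^D and a positive real weight c_{j,k,r} > 0, such that for every j and k the vectors in each group sum to zero: ∑_{r=1}^{R_j} v_{j,k,r} = 0. If D > ∑_{j ∈ A} K_j (R_j − 1), then the D×D matrix M = ∑_{j ∈ A} ∑_{k=1}^{K_j} ∑_{r=1}^{R_j} c_{j,k,r} · v_{j,k,r} v_{j,k,r}ᵀ is singular (not invertible). -/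
/-!
Each summand `c • v vᵀ` maps `ℝ^D` into the line through `v`, so the column space of `M` lies in
the span of all the `v j k r`. For fixed `j, k` the zero-sum relation makes the last vector a
combination of the other `R j - 1`, so that span has dimension at most `∑ j, K j * (R j - 1) < D`;
hence `rank M < D`.
-/

open Matrix Module Submodule

section

variable {K V : Type*} [DivisionRing K] [AddCommGroup V] [Module K V]

theorem finrank_span_range_le_pred_of_sum_eq_zero {n : ℕ} {w : Fin n → V}
    (hw : ∑ i, w i = 0) : finrank K (span K (Set.range w)) ≤ n - 1 := by
  cases n with
  | zero => rw [Set.range_eq_empty, span_empty, finrank_bot]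
  | succ n =>
    have hlast : w (Fin.last n) = -∑ i : Fin n, w i.castSucc :=
      eq_neg_of_add_eq_zero_right (by rwa [Fin.sum_univ_castSucc] at hw)
    have hle : span K (Set.range w) ≤ span K (Set.range fun i : Fin n => w i.castSucc) := by
      refine span_le.mpr ?_
      rintro _ ⟨i, rfl⟩
      induction i using Fin.lastCases with
      | last => exact hlast ▸ neg_mem (sum_mem fun i _ => subset_span ⟨i, rfl⟩)
      | cast i => exact subset_span ⟨i, rfl⟩
    have := Module.Finite.span_of_finite K (Set.finite_range fun i : Fin n => w i.castSucc)
    simpa using (finrank_mono hle).trans (finrank_range_le_card _)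

theorem finrank_iSup_le_sum [FiniteDimensional K V] {ι : Type*} [Fintype ι]
    (p : ι → Submodule K V) : finrank K ↥(⨆ i, p i) ≤ ∑ i, finrank K (p i) := by
  classical
  suffices ∀ s : Finset ι, finrank K ↥(s.sup p) ≤ ∑ i ∈ s, finrank K (p i) by
    rw [← Finset.sup_univ_eq_iSup]
    exact this _
  intro s
  induction s using Finset.induction_on with
  | empty => simp
  | insert i s hi ih =>
    rw [Finset.sup_insert, Finset.sum_insert hi]
    exact (finrank_add_le_finrank_add_finrank _ _).trans (Nat.add_le_add_left ih _)

end

theorem Matrix.rank_le_finrank_of_mulVec_mem {K m n : Type*} [Field K] [Fintype m] [Fintype n]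
    {A : Matrix m n K} {W : Submodule K (m → K)} (hA : ∀ x, A *ᵥ x ∈ W) :
    A.rank ≤ finrank K W :=
  finrank_mono (LinearMap.range_le_iff_comap.mpr (eq_top_iff.mpr fun x _ => hA x))

theorem singular_of_dim_gt_general (ι : Type*) [Fintype ι] (D : ℕ)
    (K R : ι → ℕ)
    (v : (j : ι) → Fin (K j) → Fin (R j) → (Fin D → ℝ))
    (c : (j : ι) → Fin (K j) → Fin (R j) → ℝ)
    (hsum : ∀ j k, ∑ r, v j k r = 0)
    (hD : (∑ j, K j * (R j - 1)) < D) :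
    ¬ IsUnit (∑ j, ∑ k, ∑ r, c j k r • Matrix.vecMulVec (v j k r) (v j k r)) := by
  intro hM
  set W := ⨆ j, ⨆ k, span ℝ (Set.range (v j k))
  have hcol : ∀ x, (∑ j, ∑ k, ∑ r, c j k r • vecMulVec (v j k r) (v j k r)) *ᵥ x ∈ W := by
    intro x
    simp only [sum_mulVec, smul_mulVec, vecMulVec_mulVec, op_smul_eq_smul]
    exact sum_mem fun j _ => sum_mem fun k _ => sum_mem fun r _ => smul_mem _ _ <| smul_mem _ _ <|
      mem_iSup_of_mem j <| mem_iSup_of_mem k <| subset_span ⟨r, rfl⟩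
  have hW : finrank ℝ W ≤ ∑ j, K j * (R j - 1) := calc
    finrank ℝ W ≤ ∑ j, ∑ k, finrank ℝ (span ℝ (Set.range (v j k))) :=
      (finrank_iSup_le_sum _).trans (Finset.sum_le_sum fun j _ => finrank_iSup_le_sum _)
    _ ≤ ∑ j, ∑ _k : Fin (K j), (R j - 1) := by
      gcongr with j _ k
      exact finrank_span_range_le_pred_of_sum_eq_zero (hsum j k)
    _ = ∑ j, K j * (R j - 1) := by simp
  have hrank := rank_le_finrank_of_mulVec_mem hcol
  rw [rank_of_isUnit _ hM, Fintype.card_fin] at hrank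
  omega

/-- Theorem 1 (algebraic content): if for each sensor `j` in a finite set and each
time `k ∈ {1,...,K j}` the vectors `v j k r ∈ ℝ^D`, `r ∈ {1,...,R j}`, sum to zero,
the weights `c j k r` are positive, and `D > ∑ j, K j * (R j - 1)`, then the matrix
`M = ∑ j ∑ k ∑ r, c j k r • v j k r (v j k r)ᵀ` is singular. -/
theorem singular_of_dim_gt (ι : Type*) [Fintype ι] (D : ℕ)
    (K R : ι → ℕ) (hK : ∀ j, 1 ≤ K j) (hR : ∀ j, 1 ≤ R j)
    (v : (j : ι) → Fin (K j) → Fin (R j) → (Fin D → ℝ))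
    (c : (j : ι) → Fin (K j) → Fin (R j) → ℝ)
    (hc : ∀ j k r, 0 < c j k r)
    (hsum : ∀ j k, ∑ r, v j k r = 0)
    (hD : (∑ j, K j * (R j - 1)) < D) :
    ¬ IsUnit (∑ j, ∑ k, ∑ r, c j k r • Matrix.vecMulVec (v j k r) (v j k r)) :=
  singular_of_dim_gt_general ι D K R v c hsum hD
end

section
/- Let J_0 be a real positive definite D_θ×D_θ matrix. For each p = 1, ..., P let Φ_{θ,p} be a real D_θ×n_p matrix and Φ_{τ,p} a real D_p×n_p matrix with Φ_{τ,p} Φ_{τ,p}ᵀ invertible, and set S := J_0 + ∑_{p=1}^P (Φ_{θ,p} Φ_{θ,p}ᵀ − Φ_{θ,p} Φ_{τ,p}ᵀ (Φ_{τ,p} Φ_{τ,p}ᵀ)⁻¹ Φ_{τ,p} Φ_{θ,p}ᵀ). Then S is positive definite, J_0⁻¹ − S⁻¹ is positive semidefinite, and S⁻¹ = J_0⁻¹ if and only if for every p = 1, ..., P the range of Φ_{θ,p}ᵀ is contained in the range of Φ_{τ,p}ᵀ. -/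
/-!
Each summand `A Aᵀ - A Bᵀ (B Bᵀ)⁻¹ B Aᵀ` (with `A = Φθ p`, `B = Φτ p`) equals `(K Aᵀ)ᵀ (K Aᵀ)`,
where `K = 1 - Bᵀ (B Bᵀ)⁻¹ B` is the orthogonal projection onto `ker B`. So it is positive
semidefinite, and it vanishes iff `K Aᵀ = 0`, i.e. iff `range Aᵀ ⊆ ker K = range Bᵀ`. Hence
`S ≥ J0 > 0` in the Loewner order, and since inversion is order-reversing on positive definite
matrices, `S⁻¹ ≤ J0⁻¹`, with equality iff `S = J0`, i.e. iff every summand vanishes.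
-/

open Matrix

namespace Matrix

variable {𝕜 m n : Type*} [Field 𝕜] [StarRing 𝕜] [Fintype m] [Fintype n] [DecidableEq n]

section KernelProjection

variable [DecidableEq m] {B : Matrix m n 𝕜}

noncomputable def kerProj (B : Matrix m n 𝕜) : Matrix n n 𝕜 := 1 - Bᴴ * (B * Bᴴ)⁻¹ * B

lemma conjTranspose_kerProj (B : Matrix m n 𝕜) : (kerProj B)ᴴ = kerProj B := by
  simp only [kerProj, conjTranspose_sub, conjTranspose_one, conjTranspose_mul,
    conjTranspose_nonsing_inv, conjTranspose_conjTranspose, Matrix.mul_assoc]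

lemma mul_kerProj (hB : IsUnit (B * Bᴴ)) : B * kerProj B = 0 := by
  rw [kerProj, Matrix.mul_sub, Matrix.mul_one, ← Matrix.mul_assoc, ← Matrix.mul_assoc,
    mul_nonsing_inv _ ((isUnit_iff_isUnit_det _).mp hB), Matrix.one_mul, sub_self]

lemma kerProj_mul_conjTranspose (hB : IsUnit (B * Bᴴ)) : kerProj B * Bᴴ = 0 := by
  simpa only [conjTranspose_mul, conjTranspose_kerProj, conjTranspose_zero]
    using congrArg conjTranspose (mul_kerProj hB)

lemma kerProj_mul_self (hB : IsUnit (B * Bᴴ)) : kerProj B * kerProj B = kerProj B := by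
  calc kerProj B * kerProj B = (1 - Bᴴ * (B * Bᴴ)⁻¹ * B) * kerProj B := rfl
    _ = kerProj B - Bᴴ * (B * Bᴴ)⁻¹ * (B * kerProj B) := by
      rw [Matrix.sub_mul, Matrix.one_mul, Matrix.mul_assoc]
    _ = kerProj B := by rw [mul_kerProj hB, Matrix.mul_zero, sub_zero]

lemma ker_kerProj (hB : IsUnit (B * Bᴴ)) :
    LinearMap.ker (kerProj B).mulVecLin = LinearMap.range Bᴴ.mulVecLin := by
  apply le_antisymm
  · intro v hv
    refine ⟨((B * Bᴴ)⁻¹ * B) *ᵥ v, ?_⟩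
    have hv : v - (Bᴴ * (B * Bᴴ)⁻¹ * B) *ᵥ v = 0 := by
      simpa only [LinearMap.mem_ker, mulVecLin_apply, kerProj, sub_mulVec, one_mulVec] using hv
    rw [sub_eq_zero, Matrix.mul_assoc] at hv
    rw [mulVecLin_apply, mulVec_mulVec, ← hv]
  · rw [LinearMap.range_le_ker_iff, ← mulVecLin_mul, kerProj_mul_conjTranspose hB,
      mulVecLin_zero]

lemma range_le_range_conjTranspose_iff {l : Type*} [Fintype l] [DecidableEq l]
    (hB : IsUnit (B * Bᴴ)) (X : Matrix n l 𝕜) :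
    LinearMap.range X.mulVecLin ≤ LinearMap.range Bᴴ.mulVecLin ↔ kerProj B * X = 0 := by
  rw [← ker_kerProj hB, LinearMap.range_le_ker_iff, ← mulVecLin_mul, ← toLin'_apply',
    LinearEquiv.map_eq_zero_iff]

lemma mul_conjTranspose_sub_eq_kerProj {l : Type*} (A : Matrix l n 𝕜)
    (hB : IsUnit (B * Bᴴ)) :
    A * Aᴴ - A * Bᴴ * (B * Bᴴ)⁻¹ * B * Aᴴ = (kerProj B * Aᴴ)ᴴ * (kerProj B * Aᴴ) := by
  calc A * Aᴴ - A * Bᴴ * (B * Bᴴ)⁻¹ * B * Aᴴ = A * kerProj B * Aᴴ := by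
        simp only [kerProj, Matrix.mul_sub, Matrix.sub_mul, Matrix.mul_one, Matrix.mul_assoc]
    _ = A * (kerProj B)ᴴ * kerProj B * Aᴴ := by
        rw [conjTranspose_kerProj, Matrix.mul_assoc A (kerProj B) (kerProj B), kerProj_mul_self hB]
    _ = (kerProj B * Aᴴ)ᴴ * (kerProj B * Aᴴ) := by
        simp only [conjTranspose_mul, conjTranspose_conjTranspose, Matrix.mul_assoc]

variable {l : Type*} [Fintype l] [PartialOrder 𝕜] [StarOrderedRing 𝕜]

lemma posSemidef_mul_conjTranspose_sub (A : Matrix l n 𝕜) (hB : IsUnit (B * Bᴴ)) :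
    (A * Aᴴ - A * Bᴴ * (B * Bᴴ)⁻¹ * B * Aᴴ).PosSemidef := by
  rw [mul_conjTranspose_sub_eq_kerProj A hB]
  exact posSemidef_conjTranspose_mul_self _

lemma mul_conjTranspose_sub_eq_zero_iff [DecidableEq l] (A : Matrix l n 𝕜)
    (hB : IsUnit (B * Bᴴ)) :
    A * Aᴴ - A * Bᴴ * (B * Bᴴ)⁻¹ * B * Aᴴ = 0 ↔
      LinearMap.range Aᴴ.mulVecLin ≤ LinearMap.range Bᴴ.mulVecLin := by
  rw [mul_conjTranspose_sub_eq_kerProj A hB, conjTranspose_mul_self_eq_zero,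
    range_le_range_conjTranspose_iff hB]

end KernelProjection

lemma PosDef.posSemidef_inv_sub_inv [PartialOrder 𝕜] [StarOrderedRing 𝕜]
    {A B : Matrix n n 𝕜} (hA : A.PosDef) (hBA : (B - A).PosSemidef) : (A⁻¹ - B⁻¹).PosSemidef := by
  have hB : B.PosDef := by simpa using hA.add_posSemidef hBA
  have hAdet := (isUnit_iff_isUnit_det A).mp hA.isUnit
  have hBdet := (isUnit_iff_isUnit_det B).mp hB.isUnit
  set D := B - A
  have hDA : B⁻¹ * D * A⁻¹ = A⁻¹ - B⁻¹ := by
    rw [Matrix.mul_sub, Matrix.sub_mul, nonsing_inv_mul _ hBdet, Matrix.one_mul, Matrix.mul_assoc,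
      mul_nonsing_inv _ hAdet, Matrix.mul_one]
  have hDB : A⁻¹ * D * B⁻¹ = A⁻¹ - B⁻¹ := by
    rw [Matrix.mul_sub, Matrix.sub_mul, Matrix.mul_assoc, mul_nonsing_inv _ hBdet, Matrix.mul_one,
      nonsing_inv_mul _ hAdet, Matrix.one_mul]
  have hdecomp : A⁻¹ - B⁻¹ = B⁻¹ * D * B⁻¹ᴴ + B⁻¹ * D * A⁻¹ * (B⁻¹ * D)ᴴ := by
    rw [conjTranspose_mul, hBA.isHermitian.eq, hB.inv.isHermitian.eq, hDA, ← Matrix.mul_assoc,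
      ← Matrix.add_mul, ← Matrix.add_mul, add_sub_cancel, hDB]
  rw [hdecomp]
  exact (hBA.mul_mul_conjTranspose_same _).add
    (hA.inv.posSemidef.mul_mul_conjTranspose_same _)

end Matrix

/-- Theorem 2 of the paper in matrix form. With `J0` positive definite and, for
each `p`, `Φτ p * (Φτ p)ᵀ` invertible, the matrix
`S = J0 + ∑ p, (Φθ p (Φθ p)ᵀ − Φθ p (Φτ p)ᵀ (Φτ p (Φτ p)ᵀ)⁻¹ Φτ p (Φθ p)ᵀ)`
is positive definite, `J0⁻¹ − S⁻¹` is positive semidefinite, and `S⁻¹ = J0⁻¹`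
iff for every `p` the column space of `(Φθ p)ᵀ` is contained in that of
`(Φτ p)ᵀ`. -/
theorem crb_upper_bound_and_equality (P Dθ : ℕ) (np Dp : Fin P → ℕ)
    (J0 : Matrix (Fin Dθ) (Fin Dθ) ℝ) (hJ0 : J0.PosDef)
    (Φθ : (p : Fin P) → Matrix (Fin Dθ) (Fin (np p)) ℝ)
    (Φτ : (p : Fin P) → Matrix (Fin (Dp p)) (Fin (np p)) ℝ)
    (hτ : ∀ p, IsUnit (Φτ p * (Φτ p)ᵀ))
    (S : Matrix (Fin Dθ) (Fin Dθ) ℝ)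
    (hS : S = J0 + ∑ p,
      (Φθ p * (Φθ p)ᵀ - Φθ p * (Φτ p)ᵀ * (Φτ p * (Φτ p)ᵀ)⁻¹ * Φτ p * (Φθ p)ᵀ)) :
    S.PosDef ∧ (J0⁻¹ - S⁻¹).PosSemidef ∧
      (S⁻¹ = J0⁻¹ ↔ ∀ p,
        LinearMap.range ((Φθ p)ᵀ).mulVecLin ≤ LinearMap.range ((Φτ p)ᵀ).mulVecLin) := by
  simp only [← conjTranspose_eq_transpose_of_trivial] at hτ hS ⊢
  set T := fun p ↦
    Φθ p * (Φθ p)ᴴ - Φθ p * (Φτ p)ᴴ * (Φτ p * (Φτ p)ᴴ)⁻¹ * Φτ p * (Φθ p)ᴴ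
  have hT : ∀ p, (T p).PosSemidef := fun p ↦ posSemidef_mul_conjTranspose_sub (Φθ p) (hτ p)
  have hSJ : (S - J0).PosSemidef := by
    rw [hS, add_sub_cancel_left]
    exact posSemidef_sum _ fun p _ ↦ hT p
  have hSpd : S.PosDef := by simpa using hJ0.add_posSemidef hSJ
  refine ⟨hSpd, hJ0.posSemidef_inv_sub_inv hSJ, ?_⟩
  calc S⁻¹ = J0⁻¹ ↔ S = J0 := ⟨fun h ↦ inv_inj h hSpd.det_pos.ne'.isUnit, congrArg _⟩
    _ ↔ ∑ p, T p = 0 := by rw [hS, add_eq_left]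
    _ ↔ ∀ p, T p = 0 := by
      open MatrixOrder in
      exact (Fintype.sum_eq_zero_iff_of_nonneg fun p ↦ nonneg_iff_posSemidef.2 (hT p)).trans
        funext_iff
    _ ↔ _ := forall_congr' fun p ↦ mul_conjTranspose_sub_eq_zero_iff (Φθ p) (hτ p)
end

section
/- Let D ≥ 1, let f : ℝ^D × ℝ^D → ℝ be differentiable everywhere, and let λ be a real scalar. Then the following are equivalent: (i) for all θ, τ ∈ ℝ^D and all v ∈ ℝ^D, the derivative of f at (θ, τ) in the direction (v, 0) equals λ times the derivative of f at (θ, τ) in the direction (0, v); (ii) for all θ, τ ∈ ℝ^D, f(θ, τ) = f(0, λ·θ + τ). -/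
/-!
Condition (i) says that the derivative of `f` vanishes in every direction `(-v, λ v)`. Along the
segment `t ↦ ((1 - t) θ, τ + t λ θ)`, whose velocity is `(-θ, λ θ)`, `f` is therefore constant,
which carries `(θ, τ)` to `(0, λ θ + τ)`. Conversely, if `f = f ∘ L` for the linear map
`L (θ, τ) = (0, λ θ + τ)`, the chain rule gives `Df (v, 0) = Df (0, λ v)`.
-/

open ContinuousLinearMap

section

variable {𝕜 : Type*} [NontriviallyNormedField 𝕜] {E F G : Type*} [NormedAddCommGroup E]
  [NormedSpace 𝕜 E] [NormedAddCommGroup F] [NormedSpace 𝕜 F] [NormedAddCommGroup G]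
  [NormedSpace 𝕜 G]

theorem fderiv_apply_inl_eq_of_apply_eq_apply_zero_add {f : E × F → G}
    (hf : Differentiable 𝕜 f) (A : E →L[𝕜] F) (h : ∀ x y, f (x, y) = f (0, A x + y))
    (p : E × F) (v : E) : fderiv 𝕜 f p (v, 0) = fderiv 𝕜 f p (0, A v) := by
  let L : E × F →L[𝕜] E × F := (0 : E × F →L[𝕜] E).prod (A.comp (fst 𝕜 E F) + snd 𝕜 E F)
  have hL : ∀ q : E × F, L q = (0, A q.1 + q.2) := fun _ => rfl
  have hfL : f = f ∘ L := funext fun q => (h q.1 q.2).trans (congrArg f (hL q).symm)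
  have hchain : fderiv 𝕜 f p = (fderiv 𝕜 f (L p)).comp L := by
    conv_lhs => rw [hfL]
    rw [fderiv_comp _ (hf _) L.differentiableAt, L.fderiv]
  simp [hchain, hL]

end

section

variable {𝕜 : Type*} [RCLike 𝕜] {E F G : Type*} [NormedAddCommGroup E] [NormedSpace 𝕜 E]
  [NormedAddCommGroup F] [NormedSpace 𝕜 F] [NormedAddCommGroup G] [NormedSpace 𝕜 G]

theorem Differentiable.apply_add_eq_of_fderiv_apply_eq_zero {f : E → G} (hf : Differentiable 𝕜 f)
    {w : E} (hw : ∀ p, fderiv 𝕜 f p w = 0) (p : E) : f (p + w) = f p := by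
  have hline : ∀ t : 𝕜, HasDerivAt (fun t : 𝕜 => f (p + t • w)) 0 t := fun t => by
    simpa [Function.comp_def, hw] using
      (hf _).hasFDerivAt.comp_hasDerivAt t (((hasDerivAt_id t).smul_const w).const_add p)
  simpa using is_const_of_deriv_eq_zero (fun t => (hline t).differentiableAt)
    (fun t => (hline t).deriv) 1 0

theorem Differentiable.apply_eq_apply_zero_add_of_fderiv {f : E × F → G}
    (hf : Differentiable 𝕜 f) (A : E →L[𝕜] F)
    (h : ∀ p v, fderiv 𝕜 f p (v, 0) = fderiv 𝕜 f p (0, A v)) (x : E) (y : F) :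
    f (x, y) = f (0, A x + y) := by
  have hdir : ∀ p, fderiv 𝕜 f p (-x, A x) = 0 := fun p => by
    have hsplit : ((-x, A x) : E × F) = -(x, 0) + (0, A x) := by simp
    rw [hsplit, map_add, map_neg, h, neg_add_cancel]
  have hshift := hf.apply_add_eq_of_fderiv_apply_eq_zero hdir (x, y)
  rw [← hshift, Prod.mk_add_mk, add_neg_cancel, add_comm]

theorem Differentiable.fderiv_apply_inl_eq_iff
    {f : E × F → G} (hf : Differentiable 𝕜 f) (A : E →L[𝕜] F) :
    (∀ p v, fderiv 𝕜 f p (v, 0) = fderiv 𝕜 f p (0, A v)) ↔ ∀ x y, f (x, y) = f (0, A x + y) :=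
  ⟨hf.apply_eq_apply_zero_add_of_fderiv A, fderiv_apply_inl_eq_of_apply_eq_apply_zero_add hf A⟩

end

theorem directional_deriv_iff_shift_invariance_general (D : ℕ) (lam : ℝ)
    (f : (Fin D → ℝ) × (Fin D → ℝ) → ℝ) (hf : Differentiable ℝ f) :
    (∀ (θ τ v : Fin D → ℝ),
        fderiv ℝ f (θ, τ) (v, 0) = lam * fderiv ℝ f (θ, τ) (0, v)) ↔
      (∀ θ τ : Fin D → ℝ, f (θ, τ) = f (0, lam • θ + τ)) := by
  let A : (Fin D → ℝ) →L[ℝ] Fin D → ℝ := lam • ContinuousLinearMap.id ℝ _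
  have hA : ∀ v, A v = lam • v := fun _ => rfl
  have hscale : ∀ p (v : Fin D → ℝ), fderiv ℝ f p (0, lam • v) = lam * fderiv ℝ f p (0, v) :=
    fun p v => by rw [← smul_eq_mul, ← map_smul, Prod.smul_mk, smul_zero]
  simpa only [Prod.forall, hA, hscale] using hf.fderiv_apply_inl_eq_iff A

/-- Characterization from Corollary 1: for a differentiable
`f : ℝ^D × ℝ^D → ℝ`, the directional-derivative condition
`∂f/∂θ [v] = λ · ∂f/∂τ [v]` everywhere is equivalent to `f` depending on
`(θ, τ)` only through `λ·θ + τ`, i.e. `f (θ, τ) = f (0, λ·θ + τ)`. -/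
theorem directional_deriv_iff_shift_invariance (D : ℕ) (hD : 1 ≤ D) (lam : ℝ)
    (f : (Fin D → ℝ) × (Fin D → ℝ) → ℝ) (hf : Differentiable ℝ f) :
    (∀ (θ τ v : Fin D → ℝ),
        fderiv ℝ f (θ, τ) (v, 0) = lam * fderiv ℝ f (θ, τ) (0, v)) ↔
      (∀ θ τ : Fin D → ℝ, f (θ, τ) = f (0, lam • θ + τ)) :=
  directional_deriv_iff_shift_invariance_general D lam f hf
end
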